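/- arXiv:2504.01733 — 5 statements merged into one kernel-verified Lean document; each statement's English description precedes it below -/
import Mathlib

section
/- Explicit de re knowledge is expressible: for any weighted Kripke model M = (W,E,C,β), world w, formula φ, and agent c not occurring in φ and distinct from a, the semantic condition '∃S ⊆ 𝕊 such that ∀u ∈ W, C(a) ⊆ E(w,u) implies (W,E,C^{a∪S},β),u ⊨ φ' holds if and only if M,w ⊨ (≡_a)_c ⊕_c K_a (≡_c)_a φ, where ⊕_c is the dual of the arbitrary-upskilling quantifier ⊞_c. -/
/-- A weighted Kripke model. -/
structure WKModel (W A S P : Type) where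
  ne : Nonempty W
  E : W → W → Set S
  C : A → Set S
  val : W → Set P
  symm : ∀ w u, E w u = E u w
  pos : ∀ w u, E w u = Set.univ → w = u


/-- Upskilling update of a capability function: `a`'s skills become `C a ∪ T`. -/
def updPlus {A S : Type} [DecidableEq A] (C : A → Set S) (a : A) (T : Set S) : A → Set S :=
  fun x => if x = a then C a ∪ T else C x

/-- Downskilling update: `a`'s skills become `C a \ T`. -/
def updMinus {A S : Type} [DecidableEq A] (C : A → Set S) (a : A) (T : Set S) : A → Set S :=
  fun x => if x = a then C a \ T else C x

/-- Reskilling update: `a`'s skills become `T`. -/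
def updEq {A S : Type} [DecidableEq A] (C : A → Set S) (a : A) (T : Set S) : A → Set S :=
  fun x => if x = a then T else C x

/-- Learning update: `a`'s skills become `C b`. -/
def updLearn {A S : Type} [DecidableEq A] (C : A → Set S) (a b : A) : A → Set S :=
  fun x => if x = a then C b else C x

/-- Parametrized satisfaction of `K_a ψ`: `C` is the current capability function. -/
def satKf {W A S : Type} (E : W → W → Set S) (C : A → Set S) (a : A)
    (ψ : (A → Set S) → W → Prop) (w : W) : Prop :=
  ∀ u, C a ⊆ E w u → ψ C u

/-- Satisfaction of the arbitrary-upskilling quantifier `⊞_a ψ`. -/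
def satBoxPlus {W A S : Type} [DecidableEq A] (C : A → Set S) (a : A)
    (ψ : (A → Set S) → W → Prop) (w : W) : Prop :=
  ∀ T : Set S, ψ (updPlus C a T) w

/-- Satisfaction of the learning modality `(≡_b)_a ψ`. -/
def satLearn {W A S : Type} [DecidableEq A] (C : A → Set S) (a b : A)
    (ψ : (A → Set S) → W → Prop) (w : W) : Prop :=
  ψ (updLearn C a b) w

/-- Explicit de re knowledge is expressed by `(≡_a)_c ⊕_c K_a (≡_c)_a φ`,
where `⊕_c χ := ¬⊞_c ¬χ` and `c` does not occur in `φ`. -/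
theorem explicit_de_re_expressible {W A S P : Type} [DecidableEq A]
    (M : WKModel W A S P) (w : W) (a c : A) (hca : c ≠ a)
    (φ : (A → Set S) → W → Prop)
    (hfresh : ∀ C₁ C₂ : A → Set S, (∀ x, x ≠ c → C₁ x = C₂ x) → ∀ u, (φ C₁ u ↔ φ C₂ u)) :
    (∃ T : Set S, ∀ u, M.C a ⊆ M.E w u → φ (updPlus M.C a T) u) ↔
      satLearn M.C c a
        (fun C' w' => ¬ satBoxPlus C' c
          (fun C'' w'' => ¬ satKf M.E C'' a
            (fun C₃ u => satLearn C₃ a c φ u) w'') w') w := by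
  simp only [satLearn, satBoxPlus, satKf]
  rw [not_forall]
  simp only [not_not]
  have key : ∀ T u, (φ (updPlus M.C a T) u ↔
      φ (updLearn (updPlus (updLearn M.C c a) c T) a c) u) := by
    intro T u
    apply hfresh
    intro x hx
    simp only [updPlus, updLearn]
    rcases eq_or_ne x a with rfl | hxa
    · simp [hx, hca.symm]
    · simp [hxa, hx]
  have hedge : ∀ T u, (updPlus (updLearn M.C c a) c T a ⊆ M.E w u ↔ M.C a ⊆ M.E w u) := by
    intro T u
    simp [updPlus, updLearn, hca, hca.symm]
  constructor
  · rintro ⟨T, hT⟩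
    exact ⟨T, fun u hu => (key T u).mp (hT u ((hedge T u).mp hu))⟩
  · rintro ⟨T, hT⟩
    exact ⟨T, fun u hu => (key T u).mpr (hT u ((hedge T u).mpr hu))⟩
end

section
/- A single-agent epistemic formula φ (built from atoms, negation, implication, and K_a for one fixed agent a) is satisfiable in the class of weighted Kripke models if and only if it is satisfiable in the class of symmetric Kripke models (i.e., in the logic KB). -/
/-- Single-agent epistemic formulas: atoms, negation, implication and `K` (for one fixed agent). -/
inductive Form1 (P : Type) where
  | atom : P → Form1 P
  | neg : Form1 P → Form1 P
  | impl : Form1 P → Form1 P → Form1 P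
  | K : Form1 P → Form1 P

/-- Satisfaction in a weighted Kripke model, with `K` read as `K_a`. -/
def wsat {W A S P : Type} (M : WKModel W A S P) (a : A) : Form1 P → W → Prop
  | .atom p, w => p ∈ M.val w
  | .neg φ, w => ¬ wsat M a φ w
  | .impl φ ψ, w => wsat M a φ w → wsat M a ψ w
  | .K φ, w => ∀ u, M.C a ⊆ M.E w u → wsat M a φ u

/-- Satisfaction in a (mono-modal) Kripke model `(W, R, V)`. -/
def ksat1 {W P : Type} (R : W → W → Prop) (V : W → P → Prop) : Form1 P → W → Prop
  | .atom p, w => V w p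
  | .neg φ, w => ¬ ksat1 R V φ w
  | .impl φ ψ, w => ksat1 R V φ w → ksat1 R V ψ w
  | .K φ, w => ∀ u, R w u → ksat1 R V φ u

lemma wsat_eq_ksat1 {W A S P : Type} (M : WKModel W A S P) (a : A) :
    ∀ φ (w : W), wsat M a φ w ↔
      ksat1 (fun w u => M.C a ⊆ M.E w u) (fun w p => p ∈ M.val w) φ w := by
  intro φ
  induction φ with
  | atom p => intro w; simp [wsat, ksat1]
  | neg φ ih => intro w; simp [wsat, ksat1, ih]
  | impl φ ψ ih1 ih2 => intro w; simp [wsat, ksat1, ih1, ih2]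
  | K φ ih => intro w; simp only [wsat, ksat1]; exact forall_congr' fun u => imp_congr Iff.rfl (ih u)

/-- A single-agent formula is satisfiable in the class of weighted Kripke models
(with countably infinite agent set `ℕ` and skill set `ℕ`) iff it is satisfiable in the class
of symmetric Kripke models (the logic KB). -/
theorem single_agent_weighted_iff_KB (P : Type) (φ : Form1 P) (a : ℕ) :
    (∃ (W : Type) (M : WKModel W ℕ ℕ P) (w : W), wsat M a φ w) ↔
      (∃ (W : Type) (_ : Nonempty W) (R : W → W → Prop) (_ : Symmetric R)
        (V : W → P → Prop) (w : W), ksat1 R V φ w) := by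
  constructor
  · rintro ⟨W, M, w, hw⟩
    refine ⟨W, M.ne, fun w u => M.C a ⊆ M.E w u, fun w u h => ?_, fun w p => p ∈ M.val w, w,
      (wsat_eq_ksat1 M a φ w).mp hw⟩
    show M.C a ⊆ M.E u w
    rw [M.symm u w]; exact h
  · rintro ⟨W, hne, R, hR, V, w, hw⟩
    classical
    have hEvenNe : ({n | Even n} : Set ℕ) ≠ ∅ := by
      intro h
      have : (0 : ℕ) ∈ ({n | Even n} : Set ℕ) := Even.zero
      rw [h] at this; exact this
    have hEvenNeUniv : ({n | Even n} : Set ℕ) ≠ Set.univ := by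
      intro h
      have : (1 : ℕ) ∈ ({n | Even n} : Set ℕ) := h ▸ Set.mem_univ 1
      simp at this
    have hEmptyNeUniv : (∅ : Set ℕ) ≠ Set.univ := by
      intro h
      exact absurd (h ▸ Set.mem_univ 0) (by simp)
    refine ⟨W, ⟨hne,
      fun w u => if R w u then (if w = u then Set.univ else {n | Even n}) else ∅,
      fun _ => {n | Even n}, fun w => {p | V w p}, ?_, ?_⟩, w, ?_⟩
    · intro w u
      have h2 : (R w u) = (R u w) := propext ⟨fun h => hR h, fun h => hR h⟩
      have h3 : (w = u) = (u = w) := propext ⟨Eq.symm, Eq.symm⟩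
      simp only [h2, h3]
    · intro w u h
      by_cases hr : R w u
      · rw [if_pos hr] at h
        by_cases he : w = u
        · exact he
        · rw [if_neg he] at h; exact absurd h hEvenNeUniv
      · rw [if_neg hr] at h; exact absurd h hEmptyNeUniv
    · rw [wsat_eq_ksat1]
      have hrel : (fun (w u : W) =>
          ({n | Even n} : Set ℕ) ⊆ (if R w u then (if w = u then Set.univ else {n | Even n})
            else ∅)) = R := by
        funext w u
        apply propext
        by_cases hr : R w u
        · rw [if_pos hr]
          by_cases he : w = u
          · subst he; simp [hr]
          · simp [he, hr]
        · rw [if_neg hr]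
          simp only [hr, iff_false, Set.subset_empty_iff]
          exact hEvenNe
      simpa [hrel] using hw
end

section
/- Given a weighted Kripke model M = (W, E, C, β) satisfying positivity and symmetry, and any formula χ, the model M_χ^+ = (W, E_χ^+, C, β) obtained by augmenting the edge function with group labels and their path-closure is again a weighted Kripke model (E_χ^+ remains symmetric and satisfies positivity), and the truth of every formula φ not mentioning the added group labels is preserved: M,w ⊨ φ iff M_χ^+, w ⊨ φ for all worlds w. -/
/-- Formulas of the language `L_CDEF`: atoms, falsum, negation, implication, individual
knowledge `K a`, common knowledge `Ck G`, mutual knowledge `Ek G`, distributed knowledge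
`Dk G` and field knowledge `Fk G`. -/
inductive Form (P A : Type) where
  | atom : P → Form P A
  | bot : Form P A
  | neg : Form P A → Form P A
  | impl : Form P A → Form P A → Form P A
  | K : A → Form P A → Form P A
  | Ck : Finset A → Form P A → Form P A
  | Ek : Finset A → Form P A → Form P A
  | Dk : Finset A → Form P A → Form P A
  | Fk : Finset A → Form P A → Form P A

/-- One step of a `G`-path. -/
def gstep {W A S P : Type} (M : WKModel W A S P) (G : Finset A) (w u : W) : Prop :=
  ∃ a ∈ G, M.C a ⊆ M.E w u

/-- Satisfaction in a weighted Kripke model (common knowledge via `G`-paths). -/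
def sat {W A S P : Type} (M : WKModel W A S P) : Form P A → W → Prop
  | .atom p, w => p ∈ M.val w
  | .bot, _ => False
  | .neg φ, w => ¬ sat M φ w
  | .impl φ ψ, w => sat M φ w → sat M ψ w
  | .K a φ, w => ∀ u, M.C a ⊆ M.E w u → sat M φ u
  | .Ck G φ, w => ∀ u, Relation.TransGen (gstep M G) w u → sat M φ u
  | .Ek G φ, w => ∀ a ∈ G, ∀ u, M.C a ⊆ M.E w u → sat M φ u
  | .Dk G φ, w => ∀ u, (⋃ a ∈ G, M.C a) ⊆ M.E w u → sat M φ u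
  | .Fk G φ, w => ∀ u, (⋂ a ∈ G, M.C a) ⊆ M.E w u → sat M φ u

/-- `A_χ`: the set of groups `G` such that `E_G` or `C_G` appears in `χ`. -/
def egroups {P A : Type} : Form P A → Set (Finset A)
  | .atom _ => ∅
  | .bot => ∅
  | .neg φ => egroups φ
  | .impl φ ψ => egroups φ ∪ egroups ψ
  | .K _ φ => egroups φ
  | .Ck G φ => insert G (egroups φ)
  | .Ek G φ => insert G (egroups φ)
  | .Dk _ φ => egroups φ
  | .Fk _ φ => egroups φ

/-- `E_χ`: augment the edge function with group labels (groups are treated as fresh skills,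
realized by the sum type `S ⊕ Finset A`). -/
def Echi {W A S P : Type} (M : WKModel W A (S ⊕ Finset A) P) (χ : Form P A) (w u : W) :
    Set (S ⊕ Finset A) :=
  M.E w u ∪ {s | ∃ G ∈ egroups χ, s = Sum.inr G ∧ ∃ a ∈ G, M.C a ⊆ M.E w u}

/-- `E_χ⁺`: additionally close the group labels under paths. -/
def EchiPlus {W A S P : Type} (M : WKModel W A (S ⊕ Finset A) P) (χ : Form P A) (w u : W) :
    Set (S ⊕ Finset A) :=
  Echi M χ w u ∪
    {s | ∃ G ∈ egroups χ, s = Sum.inr G ∧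
      ∃ n : ℕ, 1 ≤ n ∧ ∃ f : ℕ → W, f 0 = w ∧ f n = u ∧
        ∀ i < n, Sum.inr G ∈ Echi M χ (f i) (f (i + 1))}

theorem sat_iff_sat_of_subset_iff {W A S P : Type} (M N : WKModel W A S P)
    (hC : M.C = N.C) (hval : M.val = N.val)
    (hK : ∀ a w u, M.C a ⊆ M.E w u ↔ M.C a ⊆ N.E w u)
    (hD : ∀ (G : Finset A) w u, (⋃ a ∈ G, M.C a) ⊆ M.E w u ↔ (⋃ a ∈ G, M.C a) ⊆ N.E w u)
    (hF : ∀ (G : Finset A) w u, (⋂ a ∈ G, M.C a) ⊆ M.E w u ↔ (⋂ a ∈ G, M.C a) ⊆ N.E w u)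
    (φ : Form P A) (w : W) : sat M φ w ↔ sat N φ w := by
  obtain ⟨ne, E, C, val, symm, pos⟩ := N
  subst hC hval
  induction φ generalizing w with
  | atom p => exact Iff.rfl
  | bot => exact Iff.rfl
  | neg φ ih => exact not_congr (ih w)
  | impl φ ψ ihφ ihψ => exact imp_congr (ihφ w) (ihψ w)
  | K a φ ih => exact forall_congr' fun u => imp_congr (hK a w u) (ih u)
  | Ck G φ ih =>
    have hstep : gstep M G = gstep ⟨ne, E, M.C, M.val, symm, pos⟩ G := by
      ext w u
      exact exists_congr fun a => and_congr Iff.rfl (hK a w u)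
    exact forall_congr' fun u => imp_congr (by rw [hstep]) (ih u)
  | Ek G φ ih =>
    exact forall₂_congr fun a _ => forall_congr' fun u => imp_congr (hK a w u) (ih u)
  | Dk G φ ih => exact forall_congr' fun u => imp_congr (hD G w u) (ih u)
  | Fk G φ ih => exact forall_congr' fun u => imp_congr (hF G w u) (ih u)

section Augmentation

variable {W A S P : Type} (M : WKModel W A (S ⊕ Finset A) P) (χ : Form P A)

theorem Echi_symm (w u : W) : Echi M χ w u = Echi M χ u w := by
  rw [Echi, Echi, M.symm w u]

theorem E_subset_EchiPlus (w u : W) : M.E w u ⊆ EchiPlus M χ w u :=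
  Set.subset_union_left.trans Set.subset_union_left

theorem EchiPlus_subset_symm (w u : W) : EchiPlus M χ w u ⊆ EchiPlus M χ u w := by
  rintro s (hs | ⟨G, hG, rfl, n, hn, f, rfl, rfl, hpath⟩)
  · exact Or.inl (Echi_symm M χ w u ▸ hs)
  · refine Or.inr ⟨G, hG, rfl, n, hn, fun i => f (n - i), by simp, by simp, fun i hi => ?_⟩
    have hrev := hpath (n - (i + 1)) (by omega)
    rwa [show n - (i + 1) + 1 = n - i by omega, Echi_symm] at hrev

theorem EchiPlus_symm (w u : W) : EchiPlus M χ w u = EchiPlus M χ u w :=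
  (EchiPlus_subset_symm M χ w u).antisymm (EchiPlus_subset_symm M χ u w)

variable {M}
variable (hE : ∀ (w u : W) (G : Finset A), Sum.inr G ∉ M.E w u)
include hE

theorem inr_empty_notMem_Echi (w u : W) : Sum.inr ∅ ∉ Echi M χ w u := by
  rintro (h | ⟨G, _, hG, a, ha, _⟩)
  · exact hE w u ∅ h
  · obtain rfl := Sum.inr_injective hG
    exact Finset.notMem_empty a ha

theorem inr_empty_notMem_EchiPlus (w u : W) : Sum.inr ∅ ∉ EchiPlus M χ w u := by
  rintro (h | ⟨G, _, hG, n, hn, f, _, _, hpath⟩)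
  · exact inr_empty_notMem_Echi χ hE w u h
  · obtain rfl := Sum.inr_injective hG
    exact inr_empty_notMem_Echi χ hE _ _ (hpath 0 hn)

theorem EchiPlus_ne_univ (w u : W) : EchiPlus M χ w u ≠ Set.univ := fun h =>
  inr_empty_notMem_EchiPlus χ hE w u (h ▸ Set.mem_univ _)

theorem subset_EchiPlus_iff {X : Set (S ⊕ Finset A)}
    (hX : ∀ G : Finset A, Sum.inr G ∈ X → Sum.inr ∅ ∈ X) (w u : W) :
    X ⊆ EchiPlus M χ w u ↔ X ⊆ M.E w u := by
  refine ⟨fun h x hx => ?_, fun h => h.trans (E_subset_EchiPlus M χ w u)⟩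
  rcases h hx with (hxE | ⟨G, _, rfl, _⟩) | ⟨G, _, rfl, _⟩
  · exact hxE
  all_goals exact absurd (h (hX G hx)) (inr_empty_notMem_EchiPlus χ hE w u)

end Augmentation

section Capabilities

variable {W A S P : Type} {M : WKModel W A (S ⊕ Finset A) P}
variable (hC : ∀ (a : A) (G : Finset A), Sum.inr G ∉ M.C a)
include hC

theorem inr_notMem_biUnion_C (G H : Finset A) :
    Sum.inr H ∉ ⋃ a ∈ G, M.C a := by
  simp only [Set.mem_iUnion, not_exists]
  exact fun a _ => hC a H

theorem inr_mem_biInter_C_iff (G H : Finset A) :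
    Sum.inr H ∈ ⋂ a ∈ G, M.C a ↔ G = ∅ := by
  simp only [Set.mem_iInter, Finset.eq_empty_iff_forall_notMem]
  exact forall_congr' fun a => ⟨fun h ha => hC a H (h ha), fun h ha => absurd ha h⟩

end Capabilities

/-- `M_χ⁺ = (W, E_χ⁺, C, β)` is again a weighted Kripke model, and truth of every formula
(which never mentions the added group labels) is preserved.  The freshness hypotheses say
that no group label occurs in the original edge function or in any capability set. -/
theorem augmented_model_is_model_and_preserves_truth {W A S P : Type}
    (M : WKModel W A (S ⊕ Finset A) P) (χ : Form P A)
    (hE : ∀ (w u : W) (G : Finset A), Sum.inr G ∉ M.E w u)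
    (hC : ∀ (a : A) (G : Finset A), Sum.inr G ∉ M.C a) :
    ∃ (hs : ∀ w u, EchiPlus M χ w u = EchiPlus M χ u w)
      (hp : ∀ w u, EchiPlus M χ w u = Set.univ → w = u),
      ∀ (φ : Form P A) (w : W),
        sat M φ w ↔ sat ⟨M.ne, EchiPlus M χ, M.C, M.val, hs, hp⟩ φ w := by
  refine ⟨EchiPlus_symm M χ, fun w u h => absurd h (EchiPlus_ne_univ χ hE w u), ?_⟩
  refine sat_iff_sat_of_subset_iff _ _ rfl rfl (fun a w u => ?_) (fun G w u => ?_)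
    (fun G w u => ?_)
  · exact (subset_EchiPlus_iff χ hE (fun G h => absurd h (hC a G)) w u).symm
  · exact (subset_EchiPlus_iff χ hE
      (fun H h => absurd h (inr_notMem_biUnion_C hC G H)) w u).symm
  · exact (subset_EchiPlus_iff χ hE
      (fun H h => (inr_mem_biInter_C_iff hC G ∅).2 ((inr_mem_biInter_C_iff hC G H).1 h)) w u).symm
end

section
/- A two-agent epistemic formula φ with common knowledge is satisfiable in the class of S5 Kripke models (all relations equivalence relations) if and only if the formula ρ(φ) = φ ∧ (⋀_{χ∈μ(φ)} χ) ∧ C_{{a,b}}(⋀_{χ∈μ(φ)} χ) is satisfiable in the class of symmetric Kripke models, where μ(φ) consists of all formulas K_i ψ → K_i K_i ψ and K_i ψ → ψ for i ∈ {a,b} and ψ ranging over cl(φ) ∪ {C_G χ : χ ∈ cl(φ), G ⊆ {a,b}, G ≠ ∅}, with cl(φ) the set of subformulas of φ and their negations together with ⊤ and ⊥. -/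
/-- Two-agent epistemic formulas with common knowledge: the agents are `false` (= `a`) and
`true` (= `b`). -/
inductive FormC (P : Type) where
  | atom : P → FormC P
  | bot : FormC P
  | neg : FormC P → FormC P
  | impl : FormC P → FormC P → FormC P
  | K : Bool → FormC P → FormC P
  | Ck : Finset Bool → FormC P → FormC P

/-- Kripke satisfaction; common knowledge via nonempty paths along `⋃_{i∈G} R i`. -/
def ksat {W P : Type} (R : Bool → W → W → Prop) (V : W → P → Prop) : FormC P → W → Prop
  | .atom p, w => V w p
  | .bot, _ => False
  | .neg φ, w => ¬ ksat R V φ w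
  | .impl φ ψ, w => ksat R V φ w → ksat R V ψ w
  | .K i φ, w => ∀ u, R i w u → ksat R V φ u
  | .Ck G φ, w => ∀ u, Relation.TransGen (fun x y => ∃ i ∈ G, R i x y) w u → ksat R V φ u

/-- The subformulas of a formula. -/
def sub {P : Type} : FormC P → List (FormC P)
  | .atom p => [.atom p]
  | .bot => [.bot]
  | .neg φ => .neg φ :: sub φ
  | .impl φ ψ => .impl φ ψ :: (sub φ ++ sub ψ)
  | .K i φ => .K i φ :: sub φ
  | .Ck G φ => .Ck G φ :: sub φ

/-- The closure `cl(φ)`: subformulas, their negations, `⊤` and `⊥`. -/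
def cl {P : Type} (φ : FormC P) : List (FormC P) :=
  sub φ ++ (sub φ).map .neg ++ [.neg .bot, .bot]

/-- The nonempty subgroups of `{a, b}`. -/
def groupsList : List (Finset Bool) := [{false}, {true}, {false, true}]

/-- `cl(φ)` extended with the formulas `C_G χ` for `χ ∈ cl(φ)` and `∅ ≠ G ⊆ {a,b}`. -/
def clC {P : Type} (φ : FormC P) : List (FormC P) :=
  cl φ ++ groupsList.flatMap (fun G => (cl φ).map (.Ck G))

/-- `μ(φ)`: the formulas `K_i ψ → K_i K_i ψ` and `K_i ψ → ψ` for `i ∈ {a,b}` and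
`ψ ∈ cl(φ) ∪ {C_G χ : χ ∈ cl(φ), ∅ ≠ G ⊆ {a,b}}`. -/
def mu {P : Type} (φ : FormC P) : List (FormC P) :=
  [false, true].flatMap fun i =>
    (clC φ).flatMap fun ψ =>
      [.impl (.K i ψ) (.K i (.K i ψ)), .impl (.K i ψ) ψ]

/-- Conjunction, defined from `¬` and `→`. -/
def andF {P : Type} (φ ψ : FormC P) : FormC P := .neg (.impl φ (.neg ψ))

/-- Conjunction of a list of formulas. -/
def conj {P : Type} (l : List (FormC P)) : FormC P := l.foldr andF (.neg .bot)

/-- `ρ(φ) = φ ∧ (⋀ μ(φ)) ∧ C_{{a,b}} (⋀ μ(φ))`. -/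
def rho {P : Type} (φ : FormC P) : FormC P :=
  andF φ (andF (conj (mu φ)) (.Ck {false, true} (conj (mu φ))))

/-!
The S5 axioms T and 4 hold in every reflexive and transitive model, so an S5 model of `φ` is
already a symmetric model of `ρ(φ)`. Conversely, given a symmetric model of `ρ(φ)` at `w`, replace
each `R i` by its reflexive-transitive closure, an equivalence relation. On the worlds reachable
from `w` the instances of T and 4 in `μ(φ)` hold, and these are exactly what is needed to show, by
induction, that every formula of `cl(φ) ∪ {C_G χ}` has the same truth value in both models. The
delicate case is `C_G ψ` at `u`, which in the new model also asks for `ψ` at `u` itself: by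
symmetry `u R_i t R_i u` is a path of the old model, unless `u` has no `R_i`-successor, in which
case `K_i ψ` holds vacuously at `u` and T gives `ψ`.
-/

open Relation

section Formulas

variable {P : Type}

theorem mem_sub_self (φ : FormC P) : φ ∈ sub φ := by
  cases φ <;> simp [sub]

theorem mem_sub_trans {φ ψ χ : FormC P} (hψ : ψ ∈ sub φ) (hχ : χ ∈ sub ψ) : χ ∈ sub φ := by
  induction φ with
  | atom | bot => simp only [sub, List.mem_singleton] at hψ; subst hψ; exact hχ
  | neg φ ih | K i φ ih | Ck G φ ih =>
    rcases List.mem_cons.mp hψ with rfl | hψ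
    · exact hχ
    · exact List.mem_cons_of_mem _ (ih hψ)
  | impl φ₁ φ₂ ih₁ ih₂ =>
    simp only [sub, List.mem_cons, List.mem_append] at hψ ⊢
    rcases hψ with rfl | hψ | hψ
    · simpa [sub] using hχ
    · exact Or.inr (Or.inl (ih₁ hψ))
    · exact Or.inr (Or.inr (ih₂ hψ))

theorem mem_clC_of_mem_cl {φ ψ : FormC P} (h : ψ ∈ cl φ) : ψ ∈ clC φ :=
  List.mem_append_left _ h

theorem mem_clC_of_mem_sub {φ ψ : FormC P} (h : ψ ∈ sub φ) : ψ ∈ clC φ :=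
  mem_clC_of_mem_cl (by simp [cl, h])

theorem mem_clC_of_mem_sub_of_mem_sub {φ ψ χ : FormC P} (hψ : ψ ∈ sub φ) (hχ : χ ∈ sub ψ) :
    χ ∈ clC φ :=
  mem_clC_of_mem_sub (mem_sub_trans hψ hχ)

theorem mem_clC_of_neg_mem_clC {φ ψ : FormC P} (h : FormC.neg ψ ∈ clC φ) : ψ ∈ clC φ := by
  have h : FormC.neg ψ ∈ sub φ ∨ ψ ∈ sub φ ∨ ψ = .bot := by simpa [clC, cl, groupsList] using h
  rcases h with h | h | rfl
  · exact mem_clC_of_mem_sub_of_mem_sub h (by simp [sub, mem_sub_self])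
  · exact mem_clC_of_mem_sub h
  · exact mem_clC_of_mem_cl (by simp [cl])

theorem mem_clC_of_impl_mem_clC {φ ψ χ : FormC P} (h : FormC.impl ψ χ ∈ clC φ) :
    ψ ∈ clC φ ∧ χ ∈ clC φ := by
  have h : FormC.impl ψ χ ∈ sub φ := by simpa [clC, cl, groupsList] using h
  exact ⟨mem_clC_of_mem_sub_of_mem_sub h (by simp [sub, mem_sub_self]),
    mem_clC_of_mem_sub_of_mem_sub h (by simp [sub, mem_sub_self])⟩

theorem mem_clC_of_K_mem_clC {φ ψ : FormC P} {i : Bool} (h : FormC.K i ψ ∈ clC φ) :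
    ψ ∈ clC φ := by
  have h : FormC.K i ψ ∈ sub φ := by simpa [clC, cl, groupsList] using h
  exact mem_clC_of_mem_sub_of_mem_sub h (by simp [sub, mem_sub_self])

theorem mem_clC_of_Ck_mem_clC {φ ψ : FormC P} {G : Finset Bool} (h : FormC.Ck G ψ ∈ clC φ) :
    ψ ∈ clC φ := by
  rcases List.mem_append.mp h with h | h
  · have h : FormC.Ck G ψ ∈ sub φ := by simpa [cl] using h
    exact mem_clC_of_mem_sub_of_mem_sub h (by simp [sub, mem_sub_self])
  · obtain ⟨-, -, χ, hχ, -, rfl⟩ := by simpa only [List.mem_flatMap, List.mem_map] using h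
    exact mem_clC_of_mem_cl hχ

theorem K_imp_KK_mem_mu {φ ψ : FormC P} (i : Bool) (h : ψ ∈ clC φ) :
    .impl (.K i ψ) (.K i (.K i ψ)) ∈ mu φ :=
  List.mem_flatMap.mpr ⟨i, by cases i <;> simp, List.mem_flatMap.mpr ⟨ψ, h, by simp⟩⟩

theorem K_imp_mem_mu {φ ψ : FormC P} (i : Bool) (h : ψ ∈ clC φ) :
    .impl (.K i ψ) ψ ∈ mu φ :=
  List.mem_flatMap.mpr ⟨i, by cases i <;> simp, List.mem_flatMap.mpr ⟨ψ, h, by simp⟩⟩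

end Formulas

theorem Relation.ReflTransGen.mem_of_closed {α : Type*} {r : α → α → Prop} {S : Set α}
    (hS : ∀ ⦃x y⦄, x ∈ S → r x y → y ∈ S) {u v : α} (h : ReflTransGen r u v) (hu : u ∈ S) :
    v ∈ S := by
  induction h with
  | refl => exact hu
  | tail _ hst ih => exact hS ih hst

section Kripke

variable {W P : Type} {R : Bool → W → W → Prop} {V : W → P → Prop}

@[simp]
theorem ksat_andF (φ ψ : FormC P) (w : W) :
    ksat R V (andF φ ψ) w ↔ ksat R V φ w ∧ ksat R V ψ w := by
  simp only [andF, ksat]; tauto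

@[simp]
theorem ksat_conj (l : List (FormC P)) (w : W) :
    ksat R V (conj l) w ↔ ∀ χ ∈ l, ksat R V χ w := by
  induction l with
  | nil => simp [conj, ksat]
  | cons χ l ih => simp [conj, ← ih]

theorem ksat_of_mem_mu (hrefl : ∀ i, Reflexive (R i)) (htrans : ∀ i, Transitive (R i))
    {φ χ : FormC P} (hχ : χ ∈ mu φ) (w : W) : ksat R V χ w := by
  obtain ⟨i, -, hχ⟩ := List.mem_flatMap.mp hχ
  obtain ⟨ψ, -, hχ⟩ := List.mem_flatMap.mp hχ
  simp only [List.mem_cons, List.not_mem_nil, or_false] at hχ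
  rcases hχ with rfl | rfl
  · exact fun h u hu v hv => h v (htrans i hu hv)
  · exact fun h => h w (hrefl i w)

theorem ksat_of_ksat_Ck {i : Bool} {G : Finset Bool} {ψ : FormC P} {u : W}
    (hsym : Symmetric (R i)) (hi : i ∈ G) (hT : ksat R V (.impl (.K i ψ) ψ) u)
    (hC : ksat R V (.Ck G ψ) u) : ksat R V ψ u := by
  by_cases hsucc : ∃ t, R i u t
  · obtain ⟨t, ht⟩ := hsucc
    exact hC u (.tail (.single ⟨i, hi, ht⟩) ⟨i, hi, hsym ht⟩)
  · exact hT fun t ht => absurd ⟨t, ht⟩ hsucc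

theorem ksat_K_of_reflTransGen {i : Bool} {ψ : FormC P} {S : Set W}
    (hS : ∀ ⦃u v⦄, u ∈ S → R i u v → v ∈ S)
    (h4 : ∀ u ∈ S, ksat R V (.impl (.K i ψ) (.K i (.K i ψ))) u)
    {u v : W} (huv : ReflTransGen (R i) u v) (hu : u ∈ S) (hK : ksat R V (.K i ψ) u) :
    v ∈ S ∧ ksat R V (.K i ψ) v :=
  huv.mem_of_closed (S := S ∩ {x | ksat R V (.K i ψ) x})
    (fun _ y hx hxy => ⟨hS hx.1 hxy, h4 _ hx.1 hx.2 y hxy⟩) ⟨hu, hK⟩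

theorem reflTransGen_of_transGen_reflTransGen {G : Finset Bool} {u v : W}
    (h : TransGen (fun x y => ∃ i ∈ G, ReflTransGen (R i) x y) u v) :
    ReflTransGen (fun x y => ∃ i ∈ G, R i x y) u v :=
  reflTransGen_closed
    (fun _ _ ⟨i, hi, hxy⟩ => ReflTransGen.mono (fun _ _ h => ⟨i, hi, h⟩) _ _ hxy)
    _ _ h.to_reflTransGen

theorem ksat_iff_ksat_reflTransGen (hsym : ∀ i, Symmetric (R i)) {φ : FormC P} {S : Set W}
    (hS : ∀ i ⦃u v⦄, u ∈ S → R i u v → v ∈ S) (hmu : ∀ u ∈ S, ∀ χ ∈ mu φ, ksat R V χ u) :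
    ∀ ψ ∈ clC φ, ∀ u ∈ S, (ksat R V ψ u ↔ ksat (fun i => ReflTransGen (R i)) V ψ u) := by
  have hSG : ∀ G : Finset Bool, ∀ ⦃u v⦄, u ∈ S → (∃ i ∈ G, R i u v) → v ∈ S :=
    fun _ _ _ hu ⟨i, _, h⟩ => hS i hu h
  intro ψ
  induction ψ with
  | atom | bot => simp [ksat]
  | neg ψ ih =>
    exact fun h u hu => not_congr (ih (mem_clC_of_neg_mem_clC h) u hu)
  | impl ψ χ ihψ ihχ =>
    exact fun h u hu => imp_congr (ihψ (mem_clC_of_impl_mem_clC h).1 u hu)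
      (ihχ (mem_clC_of_impl_mem_clC h).2 u hu)
  | K i ψ ih =>
    intro h u hu
    have hψ := mem_clC_of_K_mem_clC h
    refine ⟨fun hK v hv => ?_, fun hK v hv => (ih hψ v (hS i hu hv)).mpr (hK v (.single hv))⟩
    obtain ⟨hvS, hKv⟩ := ksat_K_of_reflTransGen (hS i)
      (fun x hx => hmu x hx _ (K_imp_KK_mem_mu i hψ)) hv hu hK
    exact (ih hψ v hvS).mp (hmu v hvS _ (K_imp_mem_mu i hψ) hKv)
  | Ck G ψ ih =>
    intro h u hu
    have hψ := mem_clC_of_Ck_mem_clC h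
    constructor
    · intro hC v hv
      have hvS : v ∈ S := (reflTransGen_of_transGen_reflTransGen hv).mem_of_closed (hSG G) hu
      refine (ih hψ v hvS).mp ?_
      rcases reflTransGen_iff_eq_or_transGen.mp (reflTransGen_of_transGen_reflTransGen hv)
        with rfl | hv'
      · obtain ⟨-, ⟨i, hi, -⟩, -⟩ := TransGen.head'_iff.mp hv
        exact ksat_of_ksat_Ck (hsym i) hi (hmu v hvS _ (K_imp_mem_mu i hψ)) hC
      · exact hC v hv'
    · intro hC v hv
      have hvS : v ∈ S := hv.to_reflTransGen.mem_of_closed (hSG G) hu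
      exact (ih hψ v hvS).mpr
        (hC v (TransGen.mono (fun _ _ ⟨i, hi, hxy⟩ => ⟨i, hi, .single hxy⟩) _ _ hv))

end Kripke

/-- A two-agent formula with common knowledge is satisfiable in S5 Kripke models iff
`ρ(φ)` is satisfiable in symmetric Kripke models. -/
theorem S5_sat_iff_symmetric_sat_of_rewrite (P : Type) (φ : FormC P) :
    (∃ (W : Type) (_ : Nonempty W) (R : Bool → W → W → Prop)
      (_ : ∀ i, Reflexive (R i) ∧ Symmetric (R i) ∧ Transitive (R i))
      (V : W → P → Prop) (w : W), ksat R V φ w) ↔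
    (∃ (W : Type) (_ : Nonempty W) (R : Bool → W → W → Prop)
      (_ : ∀ i, Symmetric (R i))
      (V : W → P → Prop) (w : W), ksat R V (rho φ) w) := by
  constructor
  · rintro ⟨W, hne, R, hR, V, w, hφ⟩
    have hmu : ∀ u, ∀ χ ∈ mu φ, ksat R V χ u := fun u _ hχ =>
      ksat_of_mem_mu (fun i => (hR i).1) (fun i => (hR i).2.2) hχ u
    refine ⟨W, hne, R, fun i => (hR i).2.1, V, w, ?_⟩
    simp only [rho, ksat_andF, ksat_conj]
    exact ⟨hφ, hmu w, fun u _ => (ksat_conj _ _).mpr (hmu u)⟩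
  · rintro ⟨W, hne, R, hsym, V, w, hρ⟩
    simp only [rho, ksat_andF, ksat_conj] at hρ
    obtain ⟨hφ, hmuw, hC⟩ := hρ
    let S : Set W := {u | ReflTransGen (fun x y => ∃ i, R i x y) w u}
    have hS : ∀ i ⦃u v⦄, u ∈ S → R i u v → v ∈ S := fun i _ _ hu h => hu.tail ⟨i, h⟩
    have hmu : ∀ u ∈ S, ∀ χ ∈ mu φ, ksat R V χ u := by
      intro u hu
      rcases reflTransGen_iff_eq_or_transGen.mp hu with rfl | hwu
      · exact hmuw
      · exact (ksat_conj _ _).mp <|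
          hC u (TransGen.mono (fun _ _ ⟨i, h⟩ => ⟨i, by simp, h⟩) _ _ hwu)
    refine ⟨W, hne, fun i => ReflTransGen (R i), fun i => ?_, V, w, ?_⟩
    · exact ⟨fun _ => .refl, (@ReflTransGen.stdSymm _ _ ⟨hsym i⟩).symm, fun _ _ _ => .trans⟩
    · exact (ksat_iff_ksat_reflTransGen hsym hS hmu φ (mem_clC_of_mem_sub (mem_sub_self φ)) w
        .refl).mp hφ
end

section
/- A two-agent formula φ in the modal language with two box operators [a],[b] and a universal modality U is satisfiable in arbitrary Kripke models (logic K with universal modality) if and only if the formula ρ(φ) = ρ₁(φ) ∧ p ∧ U((p → ⋀_{x∈{a₁,a₂,b₁,b₂}} K_x ¬p) ∧ (¬p → ⋀_{x∈{a₁,a₂,b₁,b₂}} K_x p)) is satisfiable in symmetric Kripke models with universal modality, where p is a fresh atom and ρ₁ replaces each K_a θ by K_{a₁}K_{a₂}(p → θ), each K_b θ by K_{b₁}K_{b₂}(p → θ), and each U θ by U(p → θ). -/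
/-- Modal formulas with box operators `K i` (one per agent) and a universal modality `U`. -/
inductive FormU (P A : Type) where
  | atom : P → FormU P A
  | neg : FormU P A → FormU P A
  | impl : FormU P A → FormU P A → FormU P A
  | K : A → FormU P A → FormU P A
  | U : FormU P A → FormU P A

/-- Kripke satisfaction with a universal modality. -/
def usat {W P A : Type} (R : A → W → W → Prop) (V : W → P → Prop) : FormU P A → W → Prop
  | .atom p, w => V w p
  | .neg φ, w => ¬ usat R V φ w
  | .impl φ ψ, w => usat R V φ w → usat R V ψ w
  | .K i φ, w => ∀ u, R i w u → usat R V φ u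
  | .U φ, _ => ∀ u, usat R V φ u

/-- Conjunction, defined from `¬` and `→`. -/
def andU {P A : Type} (φ ψ : FormU P A) : FormU P A := .neg (.impl φ (.neg ψ))

/-- The fresh atom `p` (the `none` atom of `Option P`). -/
def pAtom {P : Type} : FormU (Option P) (Fin 4) := .atom none

/-- The translation `ρ₁`: source agents are `false` (= `a`) and `true` (= `b`); target
agents are `a₁ = 0`, `a₂ = 1`, `b₁ = 2`, `b₂ = 3`.  `K_a θ ↦ K_{a₁} K_{a₂} (p → θ)`,
`K_b θ ↦ K_{b₁} K_{b₂} (p → θ)`, `U θ ↦ U (p → θ)`. -/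
def tr {P : Type} : FormU P Bool → FormU (Option P) (Fin 4)
  | .atom q => .atom (some q)
  | .neg φ => .neg (tr φ)
  | .impl φ ψ => .impl (tr φ) (tr ψ)
  | .K false φ => .K 0 (.K 1 (.impl pAtom (tr φ)))
  | .K true φ => .K 2 (.K 3 (.impl pAtom (tr φ)))
  | .U φ => .U (.impl pAtom (tr φ))

/-- `⋀_{x ∈ {a₁,a₂,b₁,b₂}} K_x ψ`. -/
def allK {P : Type} (ψ : FormU (Option P) (Fin 4)) : FormU (Option P) (Fin 4) :=
  andU (.K 0 ψ) (andU (.K 1 ψ) (andU (.K 2 ψ) (.K 3 ψ)))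

/-- `ρ(φ) = ρ₁(φ) ∧ p ∧ U((p → ⋀_x K_x ¬p) ∧ (¬p → ⋀_x K_x p))`. -/
def rhoU {P : Type} (φ : FormU P Bool) : FormU (Option P) (Fin 4) :=
  andU (tr φ) (andU pAtom
    (.U (andU (.impl pAtom (allK (.neg pAtom))) (.impl (.neg pAtom) (allK pAtom)))))

lemma usat_andU {W P A : Type} (R : A → W → W → Prop) (V : W → P → Prop)
    (φ ψ : FormU P A) (w : W) :
    usat R V (andU φ ψ) w ↔ usat R V φ w ∧ usat R V ψ w := by
  simp [andU, usat]

/-- Forward construction: worlds of the symmetric model. -/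
abbrev Wf (W : Type) := W ⊕ (Bool × W × W)

/-- Forward construction: symmetric relations. -/
def Rf {W : Type} (R : Bool → W → W → Prop) : Fin 4 → Wf W → Wf W → Prop
  | 0 => fun x y => ∃ w u, R false w u ∧
      ((x = .inl w ∧ y = .inr (false, w, u)) ∨ (y = .inl w ∧ x = .inr (false, w, u)))
  | 1 => fun x y => ∃ w u, R false w u ∧
      ((x = .inl u ∧ y = .inr (false, w, u)) ∨ (y = .inl u ∧ x = .inr (false, w, u)))
  | 2 => fun x y => ∃ w u, R true w u ∧
      ((x = .inl w ∧ y = .inr (true, w, u)) ∨ (y = .inl w ∧ x = .inr (true, w, u)))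
  | 3 => fun x y => ∃ w u, R true w u ∧
      ((x = .inl u ∧ y = .inr (true, w, u)) ∨ (y = .inl u ∧ x = .inr (true, w, u)))

/-- Forward construction: valuation. -/
def Vf {W P : Type} (V : W → P → Prop) : Wf W → Option P → Prop
  | .inl _, none => True
  | .inl w, some q => V w q
  | .inr _, _ => False

lemma Rf_symm {W : Type} (R : Bool → W → W → Prop) : ∀ i, Symmetric (Rf R i) := by
  intro i
  fin_cases i <;>
    · rintro x y ⟨w, u, h, hc | hc⟩
      · exact ⟨w, u, h, Or.inr hc⟩
      · exact ⟨w, u, h, Or.inl hc⟩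

lemma Rf0_inl_iff {W : Type} {R : Bool → W → W → Prop} {w : W} {y : Wf W} :
    Rf R 0 (Sum.inl w) y ↔ ∃ u, R false w u ∧ y = Sum.inr (false, w, u) := by
  constructor
  · rintro ⟨w', u, h, ⟨hx, hy⟩ | ⟨hy, hx⟩⟩
    · obtain rfl := Sum.inl.inj hx
      exact ⟨u, h, hy⟩
    · exact absurd hx (by simp)
  · rintro ⟨u, h, rfl⟩
    exact ⟨w, u, h, Or.inl ⟨rfl, rfl⟩⟩

lemma Rf1_inr_iff {W : Type} {R : Bool → W → W → Prop} {c : Bool} {w u : W} {y : Wf W} :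
    Rf R 1 (Sum.inr (c, w, u)) y ↔ c = false ∧ R false w u ∧ y = Sum.inl u := by
  constructor
  · rintro ⟨w', u', h, ⟨hx, hy⟩ | ⟨hy, hx⟩⟩
    · exact absurd hx (by simp)
    · simp only [Sum.inr.injEq, Prod.mk.injEq] at hx
      obtain ⟨hc, rfl, rfl⟩ := hx
      subst hc
      exact ⟨rfl, h, hy⟩
  · rintro ⟨rfl, h, rfl⟩
    exact ⟨w, u, h, Or.inr ⟨rfl, rfl⟩⟩

lemma Rf2_inl_iff {W : Type} {R : Bool → W → W → Prop} {w : W} {y : Wf W} :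
    Rf R 2 (Sum.inl w) y ↔ ∃ u, R true w u ∧ y = Sum.inr (true, w, u) := by
  constructor
  · rintro ⟨w', u, h, ⟨hx, hy⟩ | ⟨hy, hx⟩⟩
    · obtain rfl := Sum.inl.inj hx
      exact ⟨u, h, hy⟩
    · exact absurd hx (by simp)
  · rintro ⟨u, h, rfl⟩
    exact ⟨w, u, h, Or.inl ⟨rfl, rfl⟩⟩

lemma Rf3_inr_iff {W : Type} {R : Bool → W → W → Prop} {c : Bool} {w u : W} {y : Wf W} :
    Rf R 3 (Sum.inr (c, w, u)) y ↔ c = true ∧ R true w u ∧ y = Sum.inl u := by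
  constructor
  · rintro ⟨w', u', h, ⟨hx, hy⟩ | ⟨hy, hx⟩⟩
    · exact absurd hx (by simp)
    · simp only [Sum.inr.injEq, Prod.mk.injEq] at hx
      obtain ⟨hc, rfl, rfl⟩ := hx
      subst hc
      exact ⟨rfl, h, hy⟩
  · rintro ⟨rfl, h, rfl⟩
    exact ⟨w, u, h, Or.inr ⟨rfl, rfl⟩⟩

lemma Rf_inl_inr {W : Type} {R : Bool → W → W → Prop} (i : Fin 4) (w : W) (y : Wf W)
    (h : Rf R i (Sum.inl w) y) : ∃ m, y = Sum.inr m := by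
  fin_cases i <;> obtain ⟨w', u', hR, ⟨hx, hy⟩ | ⟨hy, hx⟩⟩ := h <;>
    first | exact ⟨_, hy⟩ | exact absurd hx (by simp)

lemma Rf_inr_inl {W : Type} {R : Bool → W → W → Prop} (i : Fin 4) (m : Bool × W × W) (y : Wf W)
    (h : Rf R i (Sum.inr m) y) : ∃ v, y = Sum.inl v := by
  fin_cases i <;> obtain ⟨w', u', hR, ⟨hx, hy⟩ | ⟨hy, hx⟩⟩ := h <;>
    first | exact ⟨_, hy⟩ | exact absurd hx (by simp)

lemma fwd {W P : Type} (R : Bool → W → W → Prop) (V : W → P → Prop) :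
    ∀ (ψ : FormU P Bool) (w : W),
      usat R V ψ w ↔ usat (Rf R) (Vf V) (tr ψ) (Sum.inl w)
  | .atom q, w => by simp [usat, tr, Vf]
  | .neg ψ, w => by
      simp only [usat, tr]; rw [fwd R V ψ w]
  | .impl ψ χ, w => by
      simp only [usat, tr]; rw [fwd R V ψ w, fwd R V χ w]
  | .U ψ, w => by
      simp only [usat, tr, pAtom]
      constructor
      · intro h v
        cases v with
        | inl u => intro _; exact (fwd R V ψ u).1 (h u)
        | inr m => intro hp; exact absurd hp (by simp [Vf])
      · intro h u
        exact (fwd R V ψ u).2 (h (Sum.inl u) trivial)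
  | .K b ψ, w => by
      cases b
      · show _ ↔ usat (Rf R) (Vf V) (.K 0 (.K 1 (.impl pAtom (tr ψ)))) (Sum.inl w)
        simp only [usat, pAtom]
        constructor
        · intro h y hy
          obtain ⟨u, hR, rfl⟩ := Rf0_inl_iff.1 hy
          intro z hz
          obtain ⟨-, hR', rfl⟩ := Rf1_inr_iff.1 hz
          intro _
          exact (fwd R V ψ u).1 (h u hR)
        · intro h u hu
          exact (fwd R V ψ u).2
            (h _ (Rf0_inl_iff.2 ⟨u, hu, rfl⟩) _ (Rf1_inr_iff.2 ⟨rfl, hu, rfl⟩) trivial)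
      · show _ ↔ usat (Rf R) (Vf V) (.K 2 (.K 3 (.impl pAtom (tr ψ)))) (Sum.inl w)
        simp only [usat, pAtom]
        constructor
        · intro h y hy
          obtain ⟨u, hR, rfl⟩ := Rf2_inl_iff.1 hy
          intro z hz
          obtain ⟨-, hR', rfl⟩ := Rf3_inr_iff.1 hz
          intro _
          exact (fwd R V ψ u).1 (h u hR)
        · intro h u hu
          exact (fwd R V ψ u).2
            (h _ (Rf2_inl_iff.2 ⟨u, hu, rfl⟩) _ (Rf3_inr_iff.2 ⟨rfl, hu, rfl⟩) trivial)

lemma fwd_constraint {W P : Type} (R : Bool → W → W → Prop) (V : W → P → Prop)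
    (v : Wf W) :
    usat (Rf R) (Vf V)
      ((andU (.impl pAtom (allK (.neg pAtom))) (.impl (.neg pAtom) (allK pAtom))) :
        FormU (Option P) (Fin 4)) v := by
  rw [usat_andU]
  constructor
  · show usat _ _ pAtom v → _
    intro hp
    cases v with
    | inr m => exact absurd hp (by simp [usat, pAtom, Vf])
    | inl w =>
      simp only [allK]
      rw [usat_andU, usat_andU, usat_andU]
      refine ⟨?_, ?_, ?_, ?_⟩ <;>
        · intro z hz
          obtain ⟨m, rfl⟩ := Rf_inl_inr _ w z hz
          simp [usat, pAtom, Vf]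
  · show usat _ _ (FormU.neg pAtom) v → _
    intro hp
    cases v with
    | inl w => exact absurd (by simp [usat, pAtom, Vf] : usat (Rf R) (Vf V) pAtom (Sum.inl w)) hp
    | inr m =>
      simp only [allK]
      rw [usat_andU, usat_andU, usat_andU]
      refine ⟨?_, ?_, ?_, ?_⟩ <;>
        · intro z hz
          obtain ⟨u, rfl⟩ := Rf_inr_inl _ m z hz
          simp [usat, pAtom, Vf]

/-- Backward construction: restricted relations on p-worlds. -/
def Rb {W P : Type} (R' : Fin 4 → W → W → Prop) (V' : W → Option P → Prop) :
    Bool → {v : W // V' v none} → {v : W // V' v none} → Prop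
  | false, x, y => ∃ m, R' 0 x.val m ∧ R' 1 m y.val
  | true, x, y => ∃ m, R' 2 x.val m ∧ R' 3 m y.val

/-- Backward construction: restricted valuation. -/
def Vb {W P : Type} (V' : W → Option P → Prop) : {v : W // V' v none} → P → Prop :=
  fun x q => V' x.val (some q)

lemma bwd {W P : Type} (R' : Fin 4 → W → W → Prop) (V' : W → Option P → Prop) :
    ∀ (ψ : FormU P Bool) (x : {v : W // V' v none}),
      usat (Rb R' V') (Vb V') ψ x ↔ usat R' V' (tr ψ) x.val
  | .atom q, x => by simp [usat, tr, Vb]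
  | .neg ψ, x => by
      simp only [usat, tr]; rw [bwd R' V' ψ x]
  | .impl ψ χ, x => by
      simp only [usat, tr]; rw [bwd R' V' ψ x, bwd R' V' χ x]
  | .U ψ, x => by
      simp only [usat, tr, pAtom]
      constructor
      · intro h z hz
        exact (bwd R' V' ψ ⟨z, hz⟩).1 (h ⟨z, hz⟩)
      · intro h y
        exact (bwd R' V' ψ y).2 (h y.val y.prop)
  | .K b ψ, x => by
      cases b
      · show _ ↔ usat R' V' (.K 0 (.K 1 (.impl pAtom (tr ψ)))) x.val
        simp only [usat, pAtom]
        constructor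
        · intro h m hm z hz hp
          exact (bwd R' V' ψ ⟨z, hp⟩).1 (h ⟨z, hp⟩ ⟨m, hm, hz⟩)
        · rintro h y ⟨m, hm, hz⟩
          exact (bwd R' V' ψ y).2 (h m hm y.val hz y.prop)
      · show _ ↔ usat R' V' (.K 2 (.K 3 (.impl pAtom (tr ψ)))) x.val
        simp only [usat, pAtom]
        constructor
        · intro h m hm z hz hp
          exact (bwd R' V' ψ ⟨z, hp⟩).1 (h ⟨z, hp⟩ ⟨m, hm, hz⟩)
        · rintro h y ⟨m, hm, hz⟩
          exact (bwd R' V' ψ y).2 (h m hm y.val hz y.prop)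

/-- A two-agent formula with universal modality is satisfiable in arbitrary Kripke models
iff `ρ(φ)` is satisfiable in symmetric Kripke models with universal modality. -/
theorem KU_sat_iff_symmetric_sat_of_rewrite (P : Type) (φ : FormU P Bool) :
    (∃ (W : Type) (_ : Nonempty W) (R : Bool → W → W → Prop)
      (V : W → P → Prop) (w : W), usat R V φ w) ↔
    (∃ (W : Type) (_ : Nonempty W) (R : Fin 4 → W → W → Prop)
      (_ : ∀ i, Symmetric (R i)) (V : W → Option P → Prop) (w : W),
        usat R V (rhoU φ) w) := by
  constructor
  · rintro ⟨W, -, R, V, w, hw⟩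
    refine ⟨Wf W, ⟨Sum.inl w⟩, Rf R, Rf_symm R, Vf V, Sum.inl w, ?_⟩
    rw [rhoU, usat_andU, usat_andU]
    refine ⟨(fwd R V φ w).1 hw, by simp [usat, pAtom, Vf], ?_⟩
    intro v
    exact fwd_constraint R V v
  · rintro ⟨W, -, R', hsym, V', w, hw⟩
    rw [rhoU, usat_andU, usat_andU] at hw
    obtain ⟨htr, hp, -⟩ := hw
    have hp' : V' w none := hp
    exact ⟨{v : W // V' v none}, ⟨⟨w, hp'⟩⟩, Rb R' V', Vb V', ⟨w, hp'⟩,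
      (bwd R' V' φ ⟨w, hp'⟩).2 htr⟩
end
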